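/- Fix λ > 0. There exists λ_0 > 0 such that for every sufficiently small δ > 0 there exist a positive integer N_0 = N_0(δ) and a_0 < 2 such that the following holds: for every interval ω ⊆ [a_0, 2] and every k ∈ ℕ such that |(f_a^j)'(1)| ≥ e^{λ j} for all a ∈ ω and all j < k + N_0, if ξ_{k+j}(ω) ∩ (−δ, δ) = ∅ for all j = 0, 1, …, N_0, then |ξ_{k+N_0}(ω)| ≥ e^{(λ_0/2) N_0} |ξ_k(ω)|, where |ξ_m(ω)| denotes the diameter of the image of ω under ξ_m. -/

import Mathlib

set_option maxHeartbeats 1000000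


open Filter Topology

noncomputable section

/-- The quadratic family `f_a(x) = 1 - a x²`. -/
def f (a x : ℝ) : ℝ := 1 - a * x ^ 2

/-- `ξ n a = f_a^n(0)`, the critical orbit as a function of the parameter. -/
def xi (n : ℕ) (a : ℝ) : ℝ := (f a)^[n] 0

/-- parameter derivative of `xi n` -/
def Q : ℕ → ℝ → ℝ
  | 0, _ => 0
  | (n+1), a => -(xi n a)^2 - 2*a*(xi n a)*(Q n a)

/-- phase derivative of `(f a)^[j]` at `1` -/
def P : ℕ → ℝ → ℝ
  | 0, _ => 1
  | (j+1), a => (-(2*a*(xi (j+1) a))) * P j a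

lemma xi_zero (a : ℝ) : xi 0 a = 0 := rfl

lemma xi_succ (n : ℕ) (a : ℝ) : xi (n+1) a = 1 - a * (xi n a)^2 := by
  rw [xi, Function.iterate_succ_apply', ← xi]; rfl

lemma xi_one (a : ℝ) : xi 1 a = 1 := by
  rw [xi_succ, xi_zero]; ring

lemma xi_mem (a : ℝ) (h1 : 1 ≤ a) (h2 : a ≤ 2) :
    ∀ n, 1 ≤ n → 1 - a ≤ xi n a ∧ xi n a ≤ 1 := by
  intro n hn
  induction n with
  | zero => omega
  | succ m ih =>
    rcases Nat.eq_or_lt_of_le hn with h | h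
    · rw [show m = 0 by omega, xi_one]
      constructor <;> nlinarith
    · have hm : 1 ≤ m := by omega
      obtain ⟨hl, hu⟩ := ih hm
      rw [xi_succ]
      have hsq : (xi m a)^2 ≤ 1 := by nlinarith
      have hsq0 : 0 ≤ (xi m a)^2 := sq_nonneg _
      constructor <;> nlinarith

lemma xi_abs_le (a : ℝ) (h1 : 1 ≤ a) (h2 : a ≤ 2) (n : ℕ) (hn : 1 ≤ n) :
    |xi n a| ≤ 1 := by
  obtain ⟨hl, hu⟩ := xi_mem a h1 h2 n hn
  rw [abs_le]; constructor <;> nlinarith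

lemma hasDerivAt_xi (n : ℕ) (a : ℝ) : HasDerivAt (xi n) (Q n a) a := by
  induction n generalizing a with
  | zero =>
    have : xi 0 = fun _ : ℝ => (0:ℝ) := by funext x; rfl
    rw [this]; exact hasDerivAt_const a 0
  | succ m ih =>
    have hx : xi (m+1) = fun b : ℝ => 1 - b * (xi m b)^2 := by
      funext b; exact xi_succ m b
    rw [hx]
    have h := ((hasDerivAt_id a).mul ((ih a).pow 2))
    have h2 := (hasDerivAt_const a (1:ℝ)).sub h
    convert (show HasDerivAt (fun b : ℝ => 1 - b * (xi m b)^2) _ a from h2) using 1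
    show Q (m+1) a = _
    simp [Q]; ring

lemma continuous_xi (n : ℕ) : Continuous (xi n) := by
  induction n with
  | zero => simpa [show xi 0 = fun _ : ℝ => (0:ℝ) from rfl] using continuous_const
  | succ m ih =>
    have hx : xi (m+1) = fun b : ℝ => 1 - b * (xi m b)^2 := by
      funext b; exact xi_succ m b
    rw [hx]; continuity

lemma continuous_Q (n : ℕ) : Continuous (Q n) := by
  induction n with
  | zero => simpa [show Q 0 = fun _ : ℝ => (0:ℝ) from rfl] using continuous_const
  | succ m ih =>
    have hx : Q (m+1) = fun b : ℝ => -(xi m b)^2 - 2*b*(xi m b)*(Q m b) := rfl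
    rw [hx]
    have hc := continuous_xi m
    continuity

lemma continuous_P (n : ℕ) : Continuous (P n) := by
  induction n with
  | zero => simpa [show P 0 = fun _ : ℝ => (1:ℝ) from rfl] using continuous_const
  | succ m ih =>
    have hx : P (m+1) = fun b : ℝ => (-(2*b*(xi (m+1) b))) * P m b := rfl
    rw [hx]
    have hc := continuous_xi (m+1)
    continuity

lemma iter_one (a : ℝ) (j : ℕ) : (f a)^[j] 1 = xi (j+1) a := by
  rw [xi, Function.iterate_succ_apply]
  congr 1
  show (1:ℝ) = f a 0
  simp [f]

lemma hasDerivAt_f (a x : ℝ) : HasDerivAt (f a) (-(2*a*x)) x := by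
  have h := (hasDerivAt_const x (1:ℝ)).sub ((hasDerivAt_pow 2 x).const_mul a)
  have hfe : f a = fun y : ℝ => 1 - a * y ^ 2 := rfl
  rw [hfe]
  exact h.congr_deriv (by norm_num; ring)

lemma hasDerivAt_iter (a : ℝ) (j : ℕ) : HasDerivAt ((f a)^[j]) (P j a) 1 := by
  induction j with
  | zero =>
    simpa [P] using (hasDerivAt_id (1:ℝ))
  | succ m ih =>
    have : (f a)^[m+1] = f a ∘ (f a)^[m] := Function.iterate_succ' (f a) m
    rw [this]
    have hf : HasDerivAt (f a) (-(2*a*(xi (m+1) a))) ((f a)^[m] 1) := by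
      rw [iter_one]; exact hasDerivAt_f a _
    exact hf.comp 1 ih

lemma deriv_iter (a : ℝ) (j : ℕ) : deriv ((f a)^[j]) 1 = P j a :=
  (hasDerivAt_iter a j).deriv

section PropA

variable (lam : ℝ) (M₀ : ℕ) (a : ℝ)

lemma a_ge (ha1 : 2 - (1/100)*(1/4:ℝ)^M₀ ≤ a) : 19/10 ≤ a := by
  have h4 : (1/4:ℝ)^M₀ ≤ 1 := pow_le_one₀ (by norm_num) (by norm_num)
  nlinarith

lemma xi_trap (ha1 : 2 - (1/100)*(1/4:ℝ)^M₀ ≤ a) (ha2 : a ≤ 2) :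
    ∀ m : ℕ, m + 1 ≤ M₀ →
      0 ≤ xi (m+2) a + 1 ∧ xi (m+2) a + 1 ≤ (2-a) * ((4:ℝ)^(m+1)-1)/3 := by
  have hε0 : 0 ≤ 2 - a := by linarith
  have h19 : (19:ℝ)/10 ≤ a := a_ge M₀ a ha1
  have hsmall : ∀ m : ℕ, m + 1 ≤ M₀ → (2-a) * ((4:ℝ)^(m+1)-1)/3 ≤ 1/100 := by
    intro m hm
    have h1 : (4:ℝ)^(m+1) ≤ (4:ℝ)^M₀ := pow_le_pow_right₀ (by norm_num) hm
    have h2 : (2-a) ≤ (1/100)*(1/4:ℝ)^M₀ := by linarith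
    have h3 : (1/4:ℝ)^M₀ * (4:ℝ)^M₀ = 1 := by
      rw [← mul_pow]; norm_num
    have h4 : (0:ℝ) < (4:ℝ)^M₀ := by positivity
    have h5 : (0:ℝ) < (1/4:ℝ)^M₀ := by positivity
    calc (2-a) * ((4:ℝ)^(m+1)-1)/3 ≤ (2-a) * (4:ℝ)^M₀ / 3 := by
          apply div_le_div_of_nonneg_right ?_ (by norm_num)
          · apply mul_le_mul_of_nonneg_left ?_ hε0
            linarith
      _ ≤ ((1/100)*(1/4:ℝ)^M₀) * (4:ℝ)^M₀ / 3 := by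
          apply div_le_div_of_nonneg_right ?_ (by norm_num)
          apply mul_le_mul_of_nonneg_right h2 (le_of_lt h4)
      _ ≤ 1/100 := by
          rw [mul_assoc, h3]; norm_num
  intro m
  induction m with
  | zero =>
    intro _
    rw [show (0:ℕ)+2 = 1+1 by rfl, xi_succ, xi_one]
    constructor <;> nlinarith
  | succ i ih =>
    intro him
    obtain ⟨ih0, ih1⟩ := ih (by omega)
    have hsm := hsmall i (by omega)
    set t := xi (i+2) a + 1 with ht
    have htle : t ≤ 1/100 := le_trans ih1 hsm
    have hrec : xi (i+3) a + 1 = (2-a) + a * t * (2 - t) := by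
      rw [show i+3 = (i+2)+1 by rfl, xi_succ]; ring
    have hq0 : 0 ≤ a * t * (2 - t) := by
      apply mul_nonneg (mul_nonneg (by linarith) ih0); linarith
    constructor
    · rw [hrec]; nlinarith
    · rw [hrec]
      have h1 : a * t * (2 - t) ≤ 4 * t := by nlinarith [sq_nonneg t, mul_nonneg ih0 (show (0:ℝ) ≤ 2 - t by linarith)]
      have h2 : (4:ℝ)^(i+1+1) = 4 * (4:ℝ)^(i+1) := by ring
      calc (2-a) + a*t*(2-t) ≤ (2-a) + 4*t := by linarith
        _ ≤ (2-a) + 4*((2-a) * ((4:ℝ)^(i+1)-1)/3) := by linarith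
        _ = (2-a) * ((4:ℝ)^(i+1+1)-1)/3 := by rw [h2]; ring

lemma xi_near (ha1 : 2 - (1/100)*(1/4:ℝ)^M₀ ≤ a) (ha2 : a ≤ 2) :
    ∀ i, 2 ≤ i → i ≤ M₀+1 → -1 ≤ xi i a ∧ xi i a ≤ -(99/100) := by
  intro i h2i hiM
  obtain ⟨m, rfl⟩ : ∃ m, i = m+2 := ⟨i-2, by omega⟩
  obtain ⟨h0, h1⟩ := xi_trap M₀ a ha1 ha2 m (by omega)
  have hsmall : (2-a) * ((4:ℝ)^(m+1)-1)/3 ≤ 1/100 := by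
    have h4 : (4:ℝ)^(m+1) ≤ (4:ℝ)^M₀ := pow_le_pow_right₀ (by norm_num) (by omega)
    have h2 : (2-a) ≤ (1/100)*(1/4:ℝ)^M₀ := by linarith
    have h3 : (1/4:ℝ)^M₀ * (4:ℝ)^M₀ = 1 := by rw [← mul_pow]; norm_num
    have hε0 : 0 ≤ 2 - a := by linarith
    have h5 : (0:ℝ) < (4:ℝ)^M₀ := by positivity
    nlinarith [pow_pos (show (0:ℝ) < 1/4 by norm_num) M₀]
  constructor <;> nlinarith

lemma P_one : P 1 a = -(2*a) := by
  show (-(2*a*(xi 1 a))) * P 0 a = -(2*a)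
  rw [xi_one]; show (-(2*a*1)) * 1 = -(2*a); ring

lemma P_succ (n : ℕ) : P (n+1) a = (-(2*a*(xi (n+1) a))) * P n a := rfl

lemma P_low (ha1 : 2 - (1/100)*(1/4:ℝ)^M₀ ≤ a) (ha2 : a ≤ 2) :
    ∀ m : ℕ, m ≤ M₀ → (19/5)*(1881/500:ℝ)^m ≤ |P (m+1) a| := by
  have h19 : (19:ℝ)/10 ≤ a := a_ge M₀ a ha1
  intro m
  induction m with
  | zero =>
    intro _
    rw [P_one]
    rw [abs_neg, abs_of_nonneg (by linarith : (0:ℝ) ≤ 2*a)]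
    norm_num; linarith
  | succ i ih =>
    intro him
    have hih := ih (by omega)
    have hnear := xi_near M₀ a ha1 ha2 (i+2) (by omega) (by omega)
    have habs : 99/100 ≤ |xi (i+2) a| := by
      rw [abs_of_nonpos (by linarith [hnear.2] : xi (i+2) a ≤ 0)]
      linarith [hnear.2]
    have hthis : P (i+2) a = (-(2*a*(xi (i+2) a))) * P (i+1) a := rfl
    have hPabs : |P (i+2) a| = 2*a*|xi (i+2) a| * |P (i+1) a| := by
      rw [hthis, abs_mul, abs_neg, abs_mul, abs_mul]
      rw [abs_of_nonneg (show (0:ℝ) ≤ 2 by norm_num), abs_of_nonneg (by linarith : (0:ℝ) ≤ a)]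
    rw [hPabs]
    have hP0 : (0:ℝ) ≤ |P (i+1) a| := abs_nonneg _
    calc (19/5)*(1881/500:ℝ)^(i+1) = (1881/500) * ((19/5)*(1881/500:ℝ)^i) := by ring
      _ ≤ (1881/500) * |P (i+1) a| := by
          apply mul_le_mul_of_nonneg_left hih (by norm_num)
      _ ≤ 2 * a * |xi (i+2) a| * |P (i+1) a| := by
          apply mul_le_mul_of_nonneg_right ?_ hP0
          nlinarith

end PropA

section PropA2

variable (lam : ℝ) (M₀ : ℕ) (a : ℝ) (K : ℕ)

/-- the ratio `S m = Q (m+1) / P m`. -/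
def S (m : ℕ) (a : ℝ) : ℝ := Q (m+1) a / P m a

lemma Q_one : Q 1 a = 0 := by
  show -(xi 0 a)^2 - 2*a*(xi 0 a)*(Q 0 a) = 0
  rw [xi_zero]; show -(0:ℝ)^2 - 2*a*0*0 = 0; ring

lemma S_one (ha : (19:ℝ)/10 ≤ a) : S 1 a = 1/(2*a) := by
  have hQ2 : Q 2 a = -1 := by
    show -(xi 1 a)^2 - 2*a*(xi 1 a)*(Q 1 a) = -1
    rw [xi_one, Q_one]; ring
  rw [S, hQ2, P_one]
  rw [div_neg, neg_div]
  simp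

lemma S_rec (m : ℕ) (hm : 1 ≤ m) (ha : (19:ℝ)/10 ≤ a)
    (hne : P (m+1) a ≠ 0) :
    S (m+1) a = S m a + xi (m+1) a / (2*a*(P m a)) := by
  have hPs : P (m+1) a = (-(2*a*(xi (m+1) a))) * P m a := rfl
  have hxne : xi (m+1) a ≠ 0 := by
    intro h; apply hne; rw [hPs, h]; ring
  have hPmne : P m a ≠ 0 := by
    intro h; apply hne; rw [hPs, h]; ring
  have hane : a ≠ 0 := by intro h; rw [h] at ha; norm_num at ha
  have hQs : Q (m+2) a = -(xi (m+1) a)^2 - 2*a*(xi (m+1) a)*(Q (m+1) a) := rfl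
  rw [S, S, hQs, hPs]
  field_simp
  ring

lemma u_bound_exp (j : ℕ) (hj : 1 ≤ j) (ha : (19:ℝ)/10 ≤ a) (ha2 : a ≤ 2)
    (hP : Real.exp (lam * j) ≤ |P j a|) :
    |xi (j+1) a / (2*a*(P j a))| ≤ (5/19) * Real.exp (-(lam * j)) := by
  have hxabs : |xi (j+1) a| ≤ 1 := xi_abs_le a (by linarith) ha2 (j+1) (by omega)
  have hPpos : (0:ℝ) < |P j a| := lt_of_lt_of_le (Real.exp_pos _) hP
  have hE : (0:ℝ) < Real.exp (lam * j) := Real.exp_pos _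
  have h2a : |2*a*(P j a)| = 2*a*|P j a| := by
    rw [abs_mul, abs_mul, abs_of_nonneg (show (0:ℝ) ≤ 2 by norm_num),
      abs_of_nonneg (by linarith : (0:ℝ) ≤ a)]
  have hlow : (19/5:ℝ) * Real.exp (lam * j) ≤ 2*a*|P j a| := by
    nlinarith
  have key : |xi (j+1) a / (2*a*(P j a))| ≤ 1 / ((19/5) * Real.exp (lam*j)) := by
    rw [abs_div, h2a]
    exact div_le_div₀ (by norm_num) hxabs (by positivity) hlow
  have heq : (1:ℝ) / ((19/5) * Real.exp (lam*j)) = (5/19) * Real.exp (-(lam * j)) := by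
    rw [Real.exp_neg, one_div, mul_inv]
    norm_num
  rw [← heq]; exact key

end PropA2

section PropA3

variable (lam : ℝ) (M₀ : ℕ) (a : ℝ) (K : ℕ)

lemma u_bound_geom (ha1 : 2 - (1/100)*(1/4:ℝ)^M₀ ≤ a) (ha2 : a ≤ 2)
    (i : ℕ) (hi : i ≤ M₀) :
    |xi (i+2) a / (2*a*(P (i+1) a))| ≤ (25/361) * (500/1881:ℝ)^i := by
  have h19 : (19:ℝ)/10 ≤ a := a_ge M₀ a ha1
  have hxabs : |xi (i+2) a| ≤ 1 := xi_abs_le a (by linarith) ha2 (i+2) (by omega)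
  have hPlow := P_low M₀ a ha1 ha2 i hi
  have hq : (0:ℝ) < (1881/500:ℝ)^i := by positivity
  have hPpos : (0:ℝ) < |P (i+1) a| := lt_of_lt_of_le (by positivity) hPlow
  have h2a : |2*a*(P (i+1) a)| = 2*a*|P (i+1) a| := by
    rw [abs_mul, abs_mul, abs_of_nonneg (show (0:ℝ) ≤ 2 by norm_num),
      abs_of_nonneg (by linarith : (0:ℝ) ≤ a)]
  have hlow : (19/5:ℝ) * ((19/5)*(1881/500:ℝ)^i) ≤ 2*a*|P (i+1) a| := by
    nlinarith
  have key : |xi (i+2) a / (2*a*(P (i+1) a))| ≤ 1 / ((19/5) * ((19/5)*(1881/500:ℝ)^i)) := by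
    rw [abs_div, h2a]
    exact div_le_div₀ (by norm_num) hxabs (by positivity) hlow
  have heq : (1:ℝ) / ((19/5) * ((19/5)*(1881/500:ℝ)^i)) = (25/361) * (500/1881:ℝ)^i := by
    rw [one_div, mul_inv, mul_inv, ← inv_pow]
    norm_num
    ring
  rw [← heq]; exact key

lemma phase1 (ha1 : 2 - (1/100)*(1/4:ℝ)^M₀ ≤ a) (ha2 : a ≤ 2)
    (hP : ∀ j, j < K → Real.exp (lam * j) ≤ |P j a|) :
    ∀ i, i + 1 ≤ M₀ + 1 → i + 2 ≤ K →
      |S (i+1) a - 1/(2*a)| ≤ (1/10) * (1 - (500/1881:ℝ)^i) := by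
  have h19 : (19:ℝ)/10 ≤ a := a_ge M₀ a ha1
  intro i
  induction i with
  | zero =>
    intro _ _
    rw [S_one a h19]
    simp
  | succ i ih =>
    intro hiM hiK
    have hih := ih (by omega) (by omega)
    have hPne : P (i+2) a ≠ 0 := by
      have := hP (i+2) (by omega)
      intro h; rw [h] at this; simp at this
      exact absurd this (not_le.mpr (Real.exp_pos _))
    have hrec := S_rec a (i+1) (by omega) h19 hPne
    have hu := u_bound_geom M₀ a ha1 ha2 i (by omega)
    have hq : (0:ℝ) < (500/1881:ℝ)^i := by positivity
    have habs : |S (i+2) a - 1/(2*a)| ≤ |S (i+1) a - 1/(2*a)| + |xi (i+2) a / (2*a*(P (i+1) a))| := by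
      rw [hrec]
      have : S (i+1) a + xi (i+2) a / (2*a*(P (i+1) a)) - 1/(2*a)
           = (S (i+1) a - 1/(2*a)) + xi (i+2) a / (2*a*(P (i+1) a)) := by ring
      rw [this]
      exact abs_add_le _ _
    have hstep : (1/10) * (1 - (500/1881:ℝ)^i) + (25/361) * (500/1881:ℝ)^i
        ≤ (1/10) * (1 - (500/1881:ℝ)^(i+1)) := by
      have hpow : (500/1881:ℝ)^(i+1) = (500/1881) * (500/1881:ℝ)^i := by ring
      rw [hpow]; nlinarith
    linarith

lemma phase2 (hlam : 0 < lam)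
    (ha1 : 2 - (1/100)*(1/4:ℝ)^M₀ ≤ a) (ha2 : a ≤ 2)
    (hP : ∀ j, j < K → Real.exp (lam * j) ≤ |P j a|) :
    ∀ i, M₀ + 2 + i ≤ K →
      |S (M₀+1+i) a - 1/(2*a)| ≤ 1/10 + (5/19) *
        (Real.exp (-(lam * (M₀+1))) - Real.exp (-(lam * (M₀+1+i)))) / (1 - Real.exp (-lam)) := by
  have h19 : (19:ℝ)/10 ≤ a := a_ge M₀ a ha1
  have hD : (0:ℝ) < 1 - Real.exp (-lam) := by
    have : Real.exp (-lam) < 1 := Real.exp_lt_one_iff.mpr (by linarith)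
    linarith
  intro i
  induction i with
  | zero =>
    intro hK
    have h1 := phase1 lam M₀ a K ha1 ha2 hP M₀ (by omega) (by omega)
    have hq : (0:ℝ) < (500/1881:ℝ)^M₀ := by positivity
    have : |S (M₀+1) a - 1/(2*a)| ≤ 1/10 := by
      calc |S (M₀+1) a - 1/(2*a)| ≤ (1/10) * (1 - (500/1881:ℝ)^M₀) := h1
        _ ≤ 1/10 := by nlinarith
    simpa using this
  | succ i ih =>
    intro hK
    have hih := ih (by omega)
    have hPne : P (M₀+2+i) a ≠ 0 := by
      have := hP (M₀+2+i) (by omega)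
      intro h; rw [h] at this; simp at this
      exact absurd this (not_le.mpr (Real.exp_pos _))
    have hrec := S_rec a (M₀+1+i) (by omega) h19 (by
      have : M₀+1+i+1 = M₀+2+i := by omega
      rw [this]; exact hPne)
    have hPj := hP (M₀+1+i) (by omega)
    have hu := u_bound_exp lam a (M₀+1+i) (by omega) h19 ha2 hPj
    have hidx : M₀+1+(i+1) = M₀+1+i+1 := by omega
    rw [hidx, hrec]
    have habs : |S (M₀+1+i) a + xi (M₀+1+i+1) a / (2*a*(P (M₀+1+i) a)) - 1/(2*a)|
        ≤ |S (M₀+1+i) a - 1/(2*a)| + |xi (M₀+1+i+1) a / (2*a*(P (M₀+1+i) a))| := by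
      have : S (M₀+1+i) a + xi (M₀+1+i+1) a / (2*a*(P (M₀+1+i) a)) - 1/(2*a)
           = (S (M₀+1+i) a - 1/(2*a)) + xi (M₀+1+i+1) a / (2*a*(P (M₀+1+i) a)) := by ring
      rw [this]; exact abs_add_le _ _
    have hcast : ((M₀+1+i : ℕ) : ℝ) = (M₀:ℝ)+1+i := by push_cast; ring
    rw [hcast] at hu
    have hexp : Real.exp (-(lam * ((M₀:ℝ)+1+(i+1)))) = Real.exp (-(lam * ((M₀:ℝ)+1+i))) * Real.exp (-lam) := by
      rw [← Real.exp_add]; ring_nf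
    have hcast2 : ((M₀+1+(i+1) : ℕ) : ℝ) = (M₀:ℝ)+1+(i+1) := by push_cast; ring
    have hcast3 : ((M₀+1+i : ℕ) : ℝ) = (M₀:ℝ)+1+i := by push_cast; ring
    have hEpos : (0:ℝ) < Real.exp (-(lam * ((M₀:ℝ)+1+i))) := Real.exp_pos _
    have hstep : (5/19) * (Real.exp (-(lam * ((M₀:ℝ)+1))) - Real.exp (-(lam * ((M₀:ℝ)+1+i)))) / (1 - Real.exp (-lam))
        + (5/19) * Real.exp (-(lam * ((M₀:ℝ)+1+i)))
        ≤ (5/19) * (Real.exp (-(lam * ((M₀:ℝ)+1))) - Real.exp (-(lam * ((M₀:ℝ)+1+(i+1))))) / (1 - Real.exp (-lam)) := by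
      rw [hexp]
      rw [div_add' _ _ _ (ne_of_gt hD), div_le_div_iff₀ hD hD]
      ring_nf
      nlinarith [Real.exp_pos (-lam)]
    have hihc : |S (M₀+1+i) a - 1/(2*a)| ≤ 1/10 + (5/19) *
        (Real.exp (-(lam * ((M₀:ℝ)+1))) - Real.exp (-(lam * ((M₀:ℝ)+1+i)))) / (1 - Real.exp (-lam)) := by
      convert hih using 4 <;> rw [hcast3]
    calc |S (M₀+1+i) a + xi (M₀+1+i+1) a / (2*a*(P (M₀+1+i) a)) - 1/(2*a)|
        ≤ |S (M₀+1+i) a - 1/(2*a)| + |xi (M₀+1+i+1) a / (2*a*(P (M₀+1+i) a))| := habs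
      _ ≤ (1/10 + (5/19) * (Real.exp (-(lam * ((M₀:ℝ)+1))) - Real.exp (-(lam * ((M₀:ℝ)+1+i)))) / (1 - Real.exp (-lam)))
          + (5/19) * Real.exp (-(lam * ((M₀:ℝ)+1+i))) := by
          exact add_le_add hihc hu
      _ ≤ 1/10 + (5/19) * (Real.exp (-(lam * ((M₀:ℝ)+1))) - Real.exp (-(lam * ((M₀:ℝ)+1+(i+1))))) / (1 - Real.exp (-lam)) := by
          linarith
      _ = 1/10 + (5/19) * (Real.exp (-(lam * ((M₀:ℝ)+1))) - Real.exp (-(lam * ((M₀:ℝ)+1+(↑(i+1):ℝ))))) / (1 - Real.exp (-lam)) := by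
          norm_num

end PropA3

section PropAFinal

lemma propA (lam : ℝ) (M₀ : ℕ) (a : ℝ) (K : ℕ) (hlam : 0 < lam)
    (hM : Real.exp (-(lam * ((M₀:ℝ)+1))) ≤ (1 - Real.exp (-lam))/15)
    (ha1 : 2 - (1/100)*(1/4:ℝ)^M₀ ≤ a) (ha2 : a ≤ 2)
    (hP : ∀ j, j < K → Real.exp (lam * j) ≤ |P j a|) :
    ∀ m, 1 ≤ m → m + 1 ≤ K → 13/100 ≤ S m a ∧ S m a ≤ 39/100 := by
  have h19 : (19:ℝ)/10 ≤ a := a_ge M₀ a ha1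
  have hD : (0:ℝ) < 1 - Real.exp (-lam) := by
    have : Real.exp (-lam) < 1 := Real.exp_lt_one_iff.mpr (by linarith)
    linarith
  have hinv1 : (1:ℝ)/4 ≤ 1/(2*a) := by
    rw [div_le_div_iff₀ (by norm_num) (by linarith)]; linarith
  have hinv2 : 1/(2*a) ≤ (5:ℝ)/19 := by
    rw [div_le_div_iff₀ (by linarith) (by norm_num)]; linarith
  intro m hm hmK
  have hbd : |S m a - 1/(2*a)| ≤ 1/10 + 1/57 := by
    by_cases hcase : m ≤ M₀ + 1
    · obtain ⟨i, rfl⟩ : ∃ i, m = i + 1 := ⟨m - 1, by omega⟩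
      have h1 := phase1 lam M₀ a K ha1 ha2 hP i (by omega) (by omega)
      have hq : (0:ℝ) < (500/1881:ℝ)^i := by positivity
      nlinarith
    · obtain ⟨i, rfl⟩ : ∃ i, m = M₀ + 1 + i := ⟨m - (M₀+1), by omega⟩
      have h2 := phase2 lam M₀ a K hlam ha1 ha2 hP i (by omega)
      have hE2 : (0:ℝ) < Real.exp (-(lam * ((M₀:ℝ)+1+i))) := Real.exp_pos _
      have hE1 : Real.exp (-(lam * ((M₀:ℝ)+1))) ≤ (1 - Real.exp (-lam))/15 := hM
      have hfrac : (5/19) * (Real.exp (-(lam * ((M₀:ℝ)+1))) - Real.exp (-(lam * ((M₀:ℝ)+1+i)))) / (1 - Real.exp (-lam)) ≤ 1/57 := by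
        rw [div_le_iff₀ hD]
        nlinarith
      have hcast : ((M₀+1+i : ℕ) : ℝ) = (M₀:ℝ)+1+i := by push_cast; ring
      calc |S (M₀+1+i) a - 1/(2*a)| ≤ 1/10 + (5/19) *
            (Real.exp (-(lam * ((M₀:ℝ)+1))) - Real.exp (-(lam * ((M₀:ℝ)+1+i)))) / (1 - Real.exp (-lam)) := by
            convert h2 using 4
        _ ≤ 1/10 + 1/57 := by linarith
  rw [abs_le] at hbd
  constructor <;> linarith [hbd.1, hbd.2]

end PropAFinal

def psi (b z : ℝ) : ℝ := if z ≤ -1 + b then 8*b else 1 - z^2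

lemma psi_of_le {b z : ℝ} (h : z ≤ -1 + b) : psi b z = 8*b := if_pos h
lemma psi_of_gt {b z : ℝ} (h : ¬ (z ≤ -1 + b)) : psi b z = 1 - z^2 := if_neg h

lemma propB (a δ : ℝ) (ha19 : (19:ℝ)/10 ≤ a) (ha2 : a ≤ 2) (haδ : 2 - δ^2/2 ≤ a)
    (hδ : 0 < δ) (hδ' : δ ≤ 1/10)
    (y : ℕ → ℝ) (hy0l : 1 - a ≤ y 0) (hy0u : y 0 ≤ 1)
    (hrec : ∀ j, y (j+1) = 1 - a*(y j)^2)
    (N : ℕ) (hN : 2 ≤ N) (hav : ∀ j, j ≤ N → δ ≤ |y j|) :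
    27*δ^6*(19/10:ℝ)^N ≤ ∏ j ∈ Finset.range N, (4*a^2*(y j)^2) := by
  have hδ2 : (0:ℝ) < δ^2 := by positivity
  have hδsq : δ^2 ≤ 1/100 := by nlinarith
  set b : ℝ := (19/10)*δ^2 with hb
  have hb0 : 0 < b := by positivity
  have hbs : b ≤ 19/1000 := by rw [hb]; nlinarith
  have ha0 : (0:ℝ) < a := by linarith
  have ha2sq : (19/10:ℝ)^2 ≤ a^2 := by
    have := mul_le_mul ha19 ha19 (by norm_num) (by linarith)
    nlinarith [this]
  have haδb : b ≤ a*δ^2 := by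
    rw [hb]; linarith [mul_nonneg (by linarith : (0:ℝ) ≤ a - 19/10) hδ2.le]
  have h2ab : 2 - a ≤ b/2 := by
    rw [hb]; linarith [hδ2.le]
  -- range of orbit
  have hrange : ∀ j, 1 - a ≤ y j ∧ y j ≤ 1 := by
    intro j
    induction j with
    | zero => exact ⟨hy0l, hy0u⟩
    | succ i ih =>
      obtain ⟨hl, hu⟩ := ih
      rw [hrec]
      have h1 : (y i)^2 ≤ 1 := by
        linarith [mul_nonneg (by linarith : (0:ℝ) ≤ 1 - y i) (by linarith : (0:ℝ) ≤ y i + 1)]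
      have h0 : 0 ≤ (y i)^2 := sq_nonneg _
      have p1 := mul_nonneg ha0.le (by linarith : (0:ℝ) ≤ 1 - (y i)^2)
      have p2 := mul_nonneg ha0.le h0
      constructor <;> linarith [p1, p2]
  have hup : ∀ j, 1 ≤ j → j ≤ N → y j ≤ 1 - a*δ^2 := by
    intro j hj hjN
    obtain ⟨i, rfl⟩ : ∃ i, j = i + 1 := ⟨j - 1, by omega⟩
    have h1 : δ ≤ |y i| := hav i (by omega)
    have h2 : δ^2 ≤ (y i)^2 := by
      have := pow_le_pow_left₀ (le_of_lt hδ) h1 2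
      rwa [sq_abs] at this
    rw [hrec]
    linarith [mul_nonneg ha0.le (sub_nonneg.mpr h2)]
  -- the adapted metric weight
  have hψnonneg : ∀ j, 0 ≤ psi b (y j) := by
    intro j
    by_cases h : y j ≤ -1 + b
    · rw [psi_of_le h]; positivity
    · rw [psi_of_gt h]
      obtain ⟨hl, hu⟩ := hrange j
      linarith [mul_nonneg (by linarith : (0:ℝ) ≤ 1 - y j) (by linarith : (0:ℝ) ≤ y j + 1)]
  have hψle1 : ∀ j, psi b (y j) ≤ 1 := by
    intro j
    by_cases h : y j ≤ -1 + b
    · rw [psi_of_le h]; linarith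
    · rw [psi_of_gt h]; linarith [sq_nonneg (y j)]
  -- main step estimate
  have hstep : ∀ j, 1 ≤ j → j + 1 ≤ N →
      (19/10) * psi b (y (j+1)) ≤ (4*a^2*(y j)^2) * psi b (y j) := by
    intro j hj hjN
    have hu1 : δ ≤ |y j| := hav j (by omega)
    have hu2 : δ^2 ≤ (y j)^2 := by
      have := pow_le_pow_left₀ (le_of_lt hδ) hu1 2
      rwa [sq_abs] at this
    have huu : y j ≤ 1 - a*δ^2 := hup j hj (by omega)
    have hul : -1 ≤ y j := by linarith [(hrange j).1]
    have hvl : -1 ≤ y (j+1) := by linarith [(hrange (j+1)).1]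
    have hvu : y (j+1) ≤ 1 - a*δ^2 := hup (j+1) (by omega) hjN
    have hub : y j ≤ 1 - b := by linarith
    have hvb : y (j+1) ≤ 1 - b := by linarith
    have hurange : (y j)^2 ≤ 1 := by
      linarith [mul_nonneg (by linarith [(hrange j).2] : (0:ℝ) ≤ 1 - y j) (by linarith : (0:ℝ) ≤ y j + 1)]
    have hrecj : y (j+1) = 1 - a*(y j)^2 := hrec j
    by_cases hA : y j ≤ -1 + b
    · -- y j deep near -1
      have hψj : psi b (y j) = 8*b := psi_of_le hA
      have hmy : 1 - b ≤ -(y j) := by linarith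
      have h1b : (0:ℝ) ≤ 1 - b := by linarith
      have hsq : (1-b)^2 ≤ (y j)^2 := by
        have := pow_le_pow_left₀ h1b hmy 2
        rwa [neg_pow, show ((-1:ℝ))^2 = 1 by norm_num, one_mul] at this
      have hprod : 4*(19/10:ℝ)^2*(1-b)^2 ≤ 4*a^2*(y j)^2 := by
        have := mul_le_mul ha2sq hsq (by positivity) (by positivity)
        linarith [this]
      have hg : 13 ≤ 4*a^2*(y j)^2 := by linarith [hprod, sq_nonneg b]
      by_cases hA' : y (j+1) ≤ -1 + b
      · have hψj' : psi b (y (j+1)) = 8*b := psi_of_le hA'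
        rw [hψj, hψj']
        linarith [mul_nonneg (by linarith : (0:ℝ) ≤ 4*a^2*(y j)^2 - 13) hb0.le]
      · have hψj' : psi b (y (j+1)) = 1 - (y (j+1))^2 := psi_of_gt hA'
        rw [hψj, hψj']
        have h1v : 1 + y (j+1) ≤ 5*b := by
          rw [hrecj]
          -- 2 - a y² ≤ 5b given y² ≥ (1-b)², a ≥ 2 - b/2
          have p1 := mul_nonneg ha0.le (sub_nonneg.mpr hsq)
          have p2 := mul_nonneg (by linarith : (0:ℝ) ≤ 2 - a) hb0.le
          have p3 := mul_nonneg ha0.le (mul_nonneg hb0.le hb0.le)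
          nlinarith [p1, p2, p3, h2ab, hb0.le]
        have h2v : 1 - y (j+1) ≤ 2 := by linarith
        have hψv : 1 - (y (j+1))^2 ≤ 10*b := by
          have hm := mul_le_mul h2v h1v (by linarith) (by norm_num)
          nlinarith [hm]
        linarith [mul_nonneg (by linarith : (0:ℝ) ≤ 4*a^2*(y j)^2 - 13) hb0.le, hψv]
    · -- y j in the expanding region
      have hψj : psi b (y j) = 1 - (y j)^2 := psi_of_gt hA
      push_neg at hA
      have hsqu : (y j)^2 ≤ 1 - b := by
        linarith [mul_nonneg (by linarith : (0:ℝ) ≤ 1 - b - y j) (by linarith : (0:ℝ) ≤ y j + 1 - b),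
          mul_nonneg hb0.le (by linarith : (0:ℝ) ≤ 1 - b)]
      by_cases hA' : y (j+1) ≤ -1 + b
      · exfalso
        have h1 : 2 - b ≤ a*(y j)^2 := by rw [hrecj] at hA'; linarith
        linarith [mul_nonneg (by linarith : (0:ℝ) ≤ 2 - a) (sq_nonneg (y j)), hsqu, hb0]
      · have hψj' : psi b (y (j+1)) = 1 - (y (j+1))^2 := psi_of_gt hA'
        rw [hψj, hψj']
        have hid : 1 - (y (j+1))^2 = a*(y j)^2*(2 - a*(y j)^2) := by
          rw [hrecj]; ring
        rw [hid]
        have hkey : (19/10) * (2 - a*(y j)^2) ≤ 4*a*(1 - (y j)^2) := by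
          linarith [mul_nonneg ha0.le (by linarith : (0:ℝ) ≤ 1 - b - (y j)^2),
            mul_nonneg hb0.le (by linarith : (0:ℝ) ≤ a - 19/10), h2ab]
        have hs0 : (0:ℝ) ≤ a*(y j)^2 := by positivity
        have := mul_le_mul_of_nonneg_left hkey hs0
        linarith [this]
  -- telescoping
  have tel : ∀ i, i + 1 ≤ N →
      (19/10:ℝ)^i * psi b (y (i+1)) ≤ psi b (y 1) * ∏ j ∈ Finset.Ico 1 (i+1), (4*a^2*(y j)^2) := by
    intro i
    induction i with
    | zero =>
      intro _
      simp
    | succ i ih =>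
      intro hiN
      have hih := ih (by omega)
      have hst := hstep (i+1) (by omega) (by omega)
      have hprod : ∏ j ∈ Finset.Ico 1 (i+1+1), (4*a^2*(y j)^2)
          = (∏ j ∈ Finset.Ico 1 (i+1), (4*a^2*(y j)^2)) * (4*a^2*(y (i+1))^2) := by
        rw [Finset.prod_Ico_succ_top (by omega)]
      have hGnn : (0:ℝ) ≤ 4*a^2*(y (i+1))^2 := by positivity
      have hpow : (0:ℝ) ≤ (19/10:ℝ)^i := by positivity
      calc (19/10:ℝ)^(i+1) * psi b (y (i+2))
          = (19/10:ℝ)^i * ((19/10) * psi b (y (i+2))) := by ring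
        _ ≤ (19/10:ℝ)^i * ((4*a^2*(y (i+1))^2) * psi b (y (i+1))) := by
            apply mul_le_mul_of_nonneg_left hst hpow
        _ = (4*a^2*(y (i+1))^2) * ((19/10:ℝ)^i * psi b (y (i+1))) := by ring
        _ ≤ (4*a^2*(y (i+1))^2) * (psi b (y 1) * ∏ j ∈ Finset.Ico 1 (i+1), (4*a^2*(y j)^2)) := by
            apply mul_le_mul_of_nonneg_left hih hGnn
        _ = psi b (y 1) * ∏ j ∈ Finset.Ico 1 (i+1+1), (4*a^2*(y j)^2) := by
            rw [hprod]; ring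
  -- conclude
  obtain ⟨i, rfl⟩ : ∃ i, N = i + 1 := ⟨N - 1, by omega⟩
  have htel := tel i (le_refl _)
  have hprodIco_nn : (0:ℝ) ≤ ∏ j ∈ Finset.Ico 1 (i+1), (4*a^2*(y j)^2) := by
    apply Finset.prod_nonneg; intro j _; positivity
  have hIcoBig : (19/10:ℝ)^i * psi b (y (i+1)) ≤ ∏ j ∈ Finset.Ico 1 (i+1), (4*a^2*(y j)^2) := by
    calc (19/10:ℝ)^i * psi b (y (i+1)) ≤ psi b (y 1) * ∏ j ∈ Finset.Ico 1 (i+1), (4*a^2*(y j)^2) := htel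
      _ ≤ 1 * ∏ j ∈ Finset.Ico 1 (i+1), (4*a^2*(y j)^2) := by
          apply mul_le_mul_of_nonneg_right (hψle1 1) hprodIco_nn
      _ = _ := one_mul _
  have hψN : (19/10)^2*δ^4 ≤ psi b (y (i+1)) := by
    by_cases h : y (i+1) ≤ -1 + b
    · rw [psi_of_le h, hb]
      linarith [mul_le_mul_of_nonneg_left hδsq hδ2.le, hδ2.le]
    · rw [psi_of_gt h]
      push_neg at h
      have h1 : y (i+1) ≤ 1 - a*δ^2 := hup (i+1) (by omega) (le_refl _)
      have h2 : (19/10)*δ^2 ≤ 1 - y (i+1) := by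
        linarith [mul_nonneg (by linarith : (0:ℝ) ≤ a - 19/10) hδ2.le]
      have h3 : (19/10)*δ^2 ≤ 1 + y (i+1) := by rw [hb] at h; linarith
      have hm := mul_le_mul h2 h3 (by positivity) (by linarith)
      linarith [hm]
  have hG0 : 4*(19/10:ℝ)^2*δ^2 ≤ 4*a^2*(y 0)^2 := by
    have h1 : δ ≤ |y 0| := hav 0 (by omega)
    have h2 : δ^2 ≤ (y 0)^2 := by
      have := pow_le_pow_left₀ (le_of_lt hδ) h1 2
      rwa [sq_abs] at this
    have hm := mul_le_mul ha2sq h2 hδ2.le (by positivity)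
    linarith [hm]
  have hsplit : ∏ j ∈ Finset.range (i+1), (4*a^2*(y j)^2)
      = (4*a^2*(y 0)^2) * ∏ j ∈ Finset.Ico 1 (i+1), (4*a^2*(y j)^2) := by
    rw [Finset.range_eq_Ico, Finset.prod_eq_prod_Ico_succ_bot (by omega)]
  rw [hsplit]
  have hpow : (0:ℝ) < (19/10:ℝ)^i := by positivity
  have hIcoLow : (19/10:ℝ)^i * ((19/10)^2*δ^4) ≤ ∏ j ∈ Finset.Ico 1 (i+1), (4*a^2*(y j)^2) := by
    calc (19/10:ℝ)^i * ((19/10)^2*δ^4) ≤ (19/10:ℝ)^i * psi b (y (i+1)) := by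
          apply mul_le_mul_of_nonneg_left hψN (le_of_lt hpow)
      _ ≤ _ := hIcoBig
  calc 27*δ^6*(19/10:ℝ)^(i+1)
      ≤ (4*(19/10:ℝ)^2*δ^2) * ((19/10:ℝ)^i * ((19/10)^2*δ^4)) := by
        have hps : (19/10:ℝ)^(i+1) = (19/10)*(19/10:ℝ)^i := by ring
        rw [hps]
        have hm : (0:ℝ) < (19/10:ℝ)^i * δ^6 := by positivity
        nlinarith [hm]
    _ ≤ (4*a^2*(y 0)^2) * ((19/10:ℝ)^i * ((19/10)^2*δ^4)) := by
        apply mul_le_mul_of_nonneg_right hG0 (by positivity)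
    _ ≤ (4*a^2*(y 0)^2) * ∏ j ∈ Finset.Ico 1 (i+1), (4*a^2*(y j)^2) := by
        apply mul_le_mul_of_nonneg_left hIcoLow (by positivity)


section Assemble

lemma P_prod_sq (a : ℝ) (n : ℕ) :
    ∀ m : ℕ, (P (n+m) a)^2 = (P n a)^2 * ∏ j ∈ Finset.range m, (4*a^2*(xi (n+1+j) a)^2) := by
  intro m
  induction m with
  | zero => simp
  | succ i ih =>
    have hidx : n + (i+1) = (n+i) + 1 := by omega
    rw [hidx, P_succ, Finset.prod_range_succ, ← mul_assoc, ← ih]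
    have hidx2 : n + 1 + i = n + i + 1 := by omega
    rw [hidx2]
    ring

lemma sign_dichotomy (g : ℝ → ℝ) (hg : Continuous g) (c b : ℝ)
    (hne : ∀ x ∈ Set.Icc c b, g x ≠ 0) :
    (∀ x ∈ Set.Icc c b, 0 < g x) ∨ (∀ x ∈ Set.Icc c b, g x < 0) := by
  by_contra hcon
  push_neg at hcon
  obtain ⟨⟨x, hx, hgx⟩, ⟨z, hz, hgz⟩⟩ := hcon
  have hgx' : g x < 0 := lt_of_le_of_ne hgx (hne x hx)
  have hgz' : 0 < g z := lt_of_le_of_ne (not_lt.mp (by exact fun h => absurd h (not_lt.mpr hgz))) (Ne.symm (hne z hz))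
  have h0 : (0:ℝ) ∈ Set.uIcc (g x) (g z) := by
    rw [Set.mem_uIcc]; left; exact ⟨hgx'.le, hgz'.le⟩
  obtain ⟨w, hw, hw0⟩ := intermediate_value_uIcc (hg.continuousOn) h0
  have hwmem : w ∈ Set.Icc c b := (Set.ordConnected_Icc.uIcc_subset hx hz) hw
  exact hne w hwmem hw0

/-- Lemma 3(iii): as long as the images `ξ_{k+j}(ω)` stay outside the critical
neighbourhood `(-δ, δ)` for `N₀(δ)` consecutive steps, the parameter interval's
image grows by a definite exponential factor. -/
theorem stmt_12 (lam : ℝ) (hlam : 0 < lam) :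
    ∃ lam₀ : ℝ, 0 < lam₀ ∧ ∃ δ₀ > (0 : ℝ), ∀ δ : ℝ, 0 < δ → δ < δ₀ →
      ∃ N₀ : ℕ, 0 < N₀ ∧ ∃ a₀ : ℝ, a₀ < 2 ∧
        ∀ ω : Set ℝ, ω.OrdConnected → ω ⊆ Set.Icc a₀ 2 → ∀ k : ℕ,
          (∀ a ∈ ω, ∀ j < k + N₀, Real.exp (lam * j) ≤ |deriv ((f a)^[j]) 1|) →
          (∀ j ≤ N₀, xi (k + j) '' ω ∩ Set.Ioo (-δ) δ = ∅) →
          Real.exp (lam₀ / 2 * N₀) * Metric.diam (xi k '' ω) ≤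
            Metric.diam (xi (k + N₀) '' ω) := by

  refine ⟨Real.log (19/10) / 2, by
    have := Real.log_pos (show (1:ℝ) < 19/10 by norm_num); linarith, (1/10:ℝ), by norm_num, ?_⟩
  intro δ hδ0 hδ1
  -- choice of M₀
  set M₀ : ℕ := ⌈Real.log (15 * (1 + lam) / lam) / lam⌉₊ + 1 with hM₀def
  have hargpos : (0:ℝ) < 15 * (1 + lam) / lam := by positivity
  have hM : Real.exp (-(lam * ((M₀:ℝ)+1))) ≤ (1 - Real.exp (-lam))/15 := by
    have h1 : Real.log (15 * (1 + lam) / lam) / lam ≤ (M₀:ℝ) := by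
      calc Real.log (15 * (1 + lam) / lam) / lam ≤ (⌈Real.log (15 * (1 + lam) / lam) / lam⌉₊ : ℝ) := Nat.le_ceil _
        _ ≤ (M₀:ℝ) := by rw [hM₀def]; push_cast; linarith
    have h2 : Real.log (15 * (1 + lam) / lam) ≤ lam * ((M₀:ℝ)+1) := by
      rw [div_le_iff₀ hlam] at h1
      nlinarith [(Nat.cast_nonneg M₀ : (0:ℝ) ≤ (M₀:ℝ))]
    have h3 : Real.exp (-(lam * ((M₀:ℝ)+1))) ≤ lam / (15*(1+lam)) := by
      calc Real.exp (-(lam * ((M₀:ℝ)+1))) ≤ Real.exp (-(Real.log (15 * (1 + lam) / lam))) := by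
            apply Real.exp_le_exp.mpr; linarith
        _ = lam / (15*(1+lam)) := by
            rw [Real.exp_neg, Real.exp_log hargpos]
            rw [inv_div]
    have h4 : Real.exp (-lam) ≤ 1/(1+lam) := by
      rw [Real.exp_neg, one_div]
      exact inv_anti₀ (by linarith) (by linarith [Real.add_one_le_exp lam])
    have h5 : lam/(1+lam) ≤ 1 - Real.exp (-lam) := by
      have : lam/(1+lam) = 1 - 1/(1+lam) := by field_simp; ring
      rw [this]; linarith
    have h6 : lam / (15*(1+lam)) = (lam/(1+lam))/15 := by
      rw [div_div, mul_comm]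
    calc Real.exp (-(lam * ((M₀:ℝ)+1))) ≤ lam / (15*(1+lam)) := h3
      _ = (lam/(1+lam))/15 := h6
      _ ≤ (1 - Real.exp (-lam))/15 := by linarith
  -- choice of M and N₀
  obtain ⟨M', hM'⟩ := pow_unbounded_of_one_lt (1/δ^6) (show (1:ℝ) < 361/100 by norm_num)
  set M : ℕ := M' + 1 with hMdef
  have hM1 : 1/δ^6 < (361/100:ℝ)^M :=
    lt_of_lt_of_le hM' (pow_le_pow_right₀ (by norm_num) (by omega))
  set N₀ : ℕ := 4*M with hN₀def
  -- choice of a₀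
  set ε : ℝ := min ((1/100) * (1/4:ℝ)^M₀) (δ^2/2) with hεdef
  have hε0 : 0 < ε := lt_min (by positivity) (by positivity)
  refine ⟨N₀, by omega, 2 - ε, by linarith, ?_⟩
  intro ω hord hsub k h1 h2
  have hmem : ∀ a ∈ ω, (2 - (1/100)*(1/4:ℝ)^M₀ ≤ a ∧ a ≤ 2) ∧ 2 - δ^2/2 ≤ a := by
    intro a ha
    have h := hsub ha
    rw [Set.mem_Icc] at h
    have e1 : ε ≤ (1/100) * (1/4:ℝ)^M₀ := min_le_left _ _
    have e2 : ε ≤ δ^2/2 := min_le_right _ _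
    exact ⟨⟨by linarith [h.1], h.2⟩, by linarith [h.1]⟩
  -- degenerate small k
  clear_value M₀ M N₀ ε
  match k, h1, h2 with
  | 0, h1, h2 =>
    have hω : ω = ∅ := by
      by_contra hne
      obtain ⟨a, ha⟩ := Set.nonempty_iff_ne_empty.mpr hne
      have hmem0 : xi 0 a ∈ xi (0+0) '' ω ∩ Set.Ioo (-δ) δ := by
        constructor
        · exact ⟨a, ha, rfl⟩
        · rw [xi_zero]; exact Set.mem_Ioo.mpr ⟨by linarith, hδ0⟩
      rw [h2 0 (Nat.zero_le _)] at hmem0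
      exact hmem0
    rw [hω]
    simp [Metric.diam_nonneg]
  | 1, h1, h2 =>
    have hsub1 : (xi 1 '' ω).Subsingleton := by
      rintro _ ⟨a, _, rfl⟩ _ ⟨b, _, rfl⟩
      rw [xi_one, xi_one]
    rw [Metric.diam_subsingleton hsub1, mul_zero]
    exact Metric.diam_nonneg
  | (κ+2), h1, h2 =>
    set k := κ + 2 with hkdef
    set X : ℝ := (19/10:ℝ)^M with hXdef
    have hX0 : 0 < X := by positivity
    have hexpX : Real.exp (Real.log (19/10) / 2 / 2 * (N₀:ℕ)) = X := by
      have hc : Real.log (19/10) / 2 / 2 * ((N₀:ℕ):ℝ) = (M:ℝ) * Real.log (19/10) := by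
        rw [hN₀def]; push_cast; ring
      rw [hc, Real.exp_nat_mul, Real.exp_log (by norm_num)]
    -- transfer the derivative hypothesis
    have hP : ∀ a ∈ ω, ∀ j, j < k + N₀ → Real.exp (lam * j) ≤ |P j a| := by
      intro a ha j hj
      rw [← deriv_iter]
      exact h1 a ha j hj
    -- avoidance pointwise
    have hav : ∀ a ∈ ω, ∀ j, j ≤ N₀ → δ ≤ |xi (k+j) a| := by
      intro a ha j hj
      by_contra hcon
      push_neg at hcon
      have : xi (k+j) a ∈ xi (k+j) '' ω ∩ Set.Ioo (-δ) δ := by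
        refine ⟨⟨a, ha, rfl⟩, ?_⟩
        rw [abs_lt] at hcon
        exact ⟨hcon.1, hcon.2⟩
      rw [h2 j hj] at this
      exact this
    -- pointwise comparison of parameter-derivatives
    have key : ∀ a ∈ ω, (X * |Q k a| ≤ |Q (k + N₀) a|) ∧
        (13/100 ≤ S (κ+1+N₀) a ∧ S (κ+1+N₀) a ≤ 39/100) ∧ P (κ+1+N₀) a ≠ 0 := by
      intro a ha
      obtain ⟨⟨ha1, ha2⟩, haδ⟩ := hmem a ha
      have ha19 : (19:ℝ)/10 ≤ a := a_ge M₀ a ha1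
      have hSa := propA lam M₀ a (k + N₀) hlam hM ha1 ha2 (hP a ha)
      have hS1 := hSa (κ+1) (by omega) (by omega)
      have hSK := hSa (κ+1+N₀) (by omega) (by omega)
      have hPne1 : P (κ+1) a ≠ 0 := by
        have := hP a ha (κ+1) (by omega)
        intro hz; rw [hz] at this; simp at this
        exact absurd this (not_le.mpr (Real.exp_pos _))
      have hPneK : P (κ+1+N₀) a ≠ 0 := by
        have := hP a ha (κ+1+N₀) (by omega)
        intro hz; rw [hz] at this; simp at this
        exact absurd this (not_le.mpr (Real.exp_pos _))
      have hQk : Q k a = S (κ+1) a * P (κ+1) a := by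
        rw [S, div_mul_cancel₀ _ hPne1]
      have hQK : Q (k+N₀) a = S (κ+1+N₀) a * P (κ+1+N₀) a := by
        have hidx : k + N₀ = (κ+1+N₀) + 1 := by omega
        rw [hidx, S, div_mul_cancel₀ _ hPneK]
      -- product estimate from propB
      have hrecy : ∀ j : ℕ, xi (k+(j+1)) a = 1 - a * (xi (k+j) a)^2 := by
        intro j
        have hidx : k + (j+1) = (k+j) + 1 := by omega
        rw [hidx, xi_succ]
      have hy := xi_mem a (by linarith) ha2 k (by omega)
      have hprodB : 27*δ^6*(19/10:ℝ)^N₀ ≤ ∏ j ∈ Finset.range N₀, (4*a^2*(xi (k+j) a)^2) :=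
        propB a δ ha19 ha2 haδ hδ0 (by linarith) (fun j => xi (k+j) a) hy.1 hy.2
          hrecy N₀ (by omega) (fun j hj => hav a ha j hj)
      have hPsq : (P (κ+1+N₀) a)^2 = (P (κ+1) a)^2 * ∏ j ∈ Finset.range N₀, (4*a^2*(xi (k+j) a)^2) := by
        have := P_prod_sq a (κ+1) N₀
        have hidx : ∀ j : ℕ, κ+1+1+j = k+j := by intro j; omega
        calc (P (κ+1+N₀) a)^2 = (P (κ+1) a)^2 * ∏ j ∈ Finset.range N₀, (4*a^2*(xi (κ+1+1+j) a)^2) := this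
          _ = (P (κ+1) a)^2 * ∏ j ∈ Finset.range N₀, (4*a^2*(xi (k+j) a)^2) := rfl
      -- numeric comparison of squares
      have hYdef : (19/10:ℝ)^N₀ = ((361/100:ℝ)^M)^2 := by
        have e2 : ((361/100:ℝ)^M)^2 = (361/100:ℝ)^(M*2) := (pow_mul _ M 2).symm
        have e3 : (361/100:ℝ)^(M*2) = ((19/10:ℝ)^2)^(M*2) := by norm_num
        have e4 : ((19/10:ℝ)^2)^(M*2) = (19/10:ℝ)^(2*(M*2)) := (pow_mul _ 2 (M*2)).symm
        rw [e2, e3, e4]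
        congr 1
        omega
      have hXsq : X^2 = (361/100:ℝ)^M := by
        rw [hXdef, ← pow_mul, show M*2 = 2*M by ring, pow_mul]
        norm_num
      have hY0 : (0:ℝ) < (361/100:ℝ)^M := by positivity
      have h361 : (1:ℝ) < δ^6 * (361/100)^M := by
        have hd6 : (0:ℝ) < δ^6 := by positivity
        calc (1:ℝ) = δ^6 * (1/δ^6) := by field_simp
          _ < δ^6 * (361/100)^M := by
              apply mul_lt_mul_of_pos_left hM1 hd6
      have hsq : 9 * X^2 * (P (κ+1) a)^2 ≤ (P (κ+1+N₀) a)^2 := by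
        rw [hPsq, hXsq]
        have hfac : 9 * (361/100:ℝ)^M ≤ 27*δ^6*(19/10:ℝ)^N₀ := by
          rw [hYdef]
          nlinarith [hY0, h361, sq_nonneg ((361/100:ℝ)^M)]
        have hPP : (0:ℝ) ≤ (P (κ+1) a)^2 := sq_nonneg _
        calc 9 * (361/100:ℝ)^M * (P (κ+1) a)^2 ≤ (27*δ^6*(19/10:ℝ)^N₀) * (P (κ+1) a)^2 := by
              apply mul_le_mul_of_nonneg_right hfac hPP
          _ ≤ (∏ j ∈ Finset.range N₀, (4*a^2*(xi (k+j) a)^2)) * (P (κ+1) a)^2 := by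
              apply mul_le_mul_of_nonneg_right hprodB hPP
          _ = (P (κ+1) a)^2 * ∏ j ∈ Finset.range N₀, (4*a^2*(xi (k+j) a)^2) := by ring
      have hkey3 : 3 * X * |P (κ+1) a| ≤ |P (κ+1+N₀) a| := by
        apply le_of_pow_le_pow_left₀ (two_ne_zero) (abs_nonneg _)
        calc (3 * X * |P (κ+1) a|)^2 = 9 * X^2 * (P (κ+1) a)^2 := by
              rw [mul_pow, mul_pow, sq_abs]; ring
          _ ≤ (P (κ+1+N₀) a)^2 := hsq
          _ = |P (κ+1+N₀) a|^2 := (sq_abs _).symm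
      refine ⟨?_, ⟨hSK.1, hSK.2⟩, hPneK⟩
      have hQkabs : |Q k a| ≤ (39/100) * |P (κ+1) a| := by
        rw [hQk, abs_mul]
        apply mul_le_mul_of_nonneg_right ?_ (abs_nonneg _)
        rw [abs_of_nonneg (by linarith [hS1.1] : (0:ℝ) ≤ S (κ+1) a)]
        exact hS1.2
      have hQKabs : (13/100) * |P (κ+1+N₀) a| ≤ |Q (k+N₀) a| := by
        rw [hQK, abs_mul]
        apply mul_le_mul_of_nonneg_right ?_ (abs_nonneg _)
        rw [abs_of_nonneg (by linarith [hSK.1] : (0:ℝ) ≤ S (κ+1+N₀) a)]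
        exact hSK.1
      calc X * |Q k a| ≤ X * ((39/100) * |P (κ+1) a|) := by
            apply mul_le_mul_of_nonneg_left hQkabs hX0.le
        _ = (13/100) * (3 * X * |P (κ+1) a|) := by ring
        _ ≤ (13/100) * |P (κ+1+N₀) a| := by
            apply mul_le_mul_of_nonneg_left hkey3 (by norm_num)
        _ ≤ |Q (k+N₀) a| := hQKabs
    -- boundedness of the image
    have hbdd : Bornology.IsBounded (xi (k + N₀) '' ω) := by
      apply (Metric.isBounded_Icc (-1:ℝ) 1).subset
      rintro _ ⟨x, hx, rfl⟩
      obtain ⟨⟨hx1, hx2⟩, _⟩ := hmem x hx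
      have h19 : (19:ℝ)/10 ≤ x := a_ge M₀ x hx1
      obtain ⟨hl, hu⟩ := xi_mem x (by linarith) hx2 (k+N₀) (by omega)
      exact ⟨by linarith, hu⟩
    -- pairwise estimate
    have pair : ∀ bb ∈ ω, ∀ cc ∈ ω, cc ≤ bb →
        |xi k bb - xi k cc| ≤ X⁻¹ * Metric.diam (xi (k + N₀) '' ω) := by
      intro bb hbb cc hcc hcb
      have hIcc : Set.Icc cc bb ⊆ ω := hord.out hcc hbb
      -- sign constancy of Q (k+N₀) on Icc cc bb
      have hPneIcc : ∀ x ∈ Set.Icc cc bb, P (κ+1+N₀) x ≠ 0 := by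
        intro x hx
        have := hP x (hIcc hx) (κ+1+N₀) (by omega)
        intro hz; rw [hz] at this; simp at this
        exact absurd this (not_le.mpr (Real.exp_pos _))
      have hsign := sign_dichotomy (P (κ+1+N₀)) (continuous_P _) cc bb hPneIcc
      have hQsign : (∀ x ∈ Set.Icc cc bb, 0 ≤ Q (k+N₀) x) ∨ (∀ x ∈ Set.Icc cc bb, Q (k+N₀) x ≤ 0) := by
        have hQrw : ∀ x ∈ Set.Icc cc bb, Q (k+N₀) x = S (κ+1+N₀) x * P (κ+1+N₀) x := by
          intro x hx
          have hidx : k + N₀ = (κ+1+N₀) + 1 := by omega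
          rw [hidx, S, div_mul_cancel₀ _ (hPneIcc x hx)]
        have hSpos : ∀ x ∈ Set.Icc cc bb, (0:ℝ) < S (κ+1+N₀) x := by
          intro x hx
          have := (key x (hIcc hx)).2.1.1
          linarith
        rcases hsign with hpos | hneg
        · left; intro x hx
          rw [hQrw x hx]
          exact le_of_lt (mul_pos (hSpos x hx) (hpos x hx))
        · right; intro x hx
          rw [hQrw x hx]
          exact le_of_lt (mul_neg_of_pos_of_neg (hSpos x hx) (hneg x hx))
      -- FTC
      have hFTCk : ∫ x in cc..bb, Q k x = xi k bb - xi k cc := by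
        apply intervalIntegral.integral_eq_sub_of_hasDerivAt (fun x _ => hasDerivAt_xi k x)
        exact (continuous_Q k).intervalIntegrable cc bb
      have hFTCK : ∫ x in cc..bb, Q (k+N₀) x = xi (k+N₀) bb - xi (k+N₀) cc := by
        apply intervalIntegral.integral_eq_sub_of_hasDerivAt (fun x _ => hasDerivAt_xi (k+N₀) x)
        exact (continuous_Q (k+N₀)).intervalIntegrable cc bb
      have hint1 : IntervalIntegrable (fun x => |Q k x|) MeasureTheory.volume cc bb :=
        ((continuous_Q k).abs).intervalIntegrable cc bb
      have hint2 : IntervalIntegrable (fun x => X⁻¹ * |Q (k+N₀) x|) MeasureTheory.volume cc bb :=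
        (continuous_const.mul ((continuous_Q (k+N₀)).abs)).intervalIntegrable cc bb
      have hmono : ∫ x in cc..bb, |Q k x| ≤ ∫ x in cc..bb, X⁻¹ * |Q (k+N₀) x| := by
        apply intervalIntegral.integral_mono_on hcb hint1 hint2
        intro x hx
        have hk := (key x (hIcc hx)).1
        calc |Q k x| = X⁻¹ * (X * |Q k x|) := by field_simp
          _ ≤ X⁻¹ * |Q (k+N₀) x| := mul_le_mul_of_nonneg_left hk (by positivity)
      have habsint : ∫ x in cc..bb, |Q (k+N₀) x| = |∫ x in cc..bb, Q (k+N₀) x| := by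
        rcases hQsign with hpos | hneg
        · have hcongr : ∫ x in cc..bb, |Q (k+N₀) x| = ∫ x in cc..bb, Q (k+N₀) x := by
            apply intervalIntegral.integral_congr
            intro x hx
            rw [Set.uIcc_of_le hcb] at hx
            exact abs_of_nonneg (hpos x hx)
          rw [hcongr, abs_of_nonneg (intervalIntegral.integral_nonneg hcb hpos)]
        · have hcongr : ∫ x in cc..bb, |Q (k+N₀) x| = ∫ x in cc..bb, -(Q (k+N₀) x) := by
            apply intervalIntegral.integral_congr
            intro x hx
            rw [Set.uIcc_of_le hcb] at hx
            exact abs_of_nonpos (hneg x hx)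
          have hneg' : 0 ≤ ∫ x in cc..bb, -(Q (k+N₀) x) :=
            intervalIntegral.integral_nonneg hcb (fun x hx => by linarith [hneg x hx])
          have hval : (∫ x in cc..bb, -(Q (k+N₀) x)) = -(∫ x in cc..bb, Q (k+N₀) x) :=
            intervalIntegral.integral_neg
          rw [hval] at hneg'
          rw [hcongr, hval, abs_of_nonpos (by linarith : (∫ x in cc..bb, Q (k+N₀) x) ≤ 0)]
      have hdiam : |xi (k+N₀) bb - xi (k+N₀) cc| ≤ Metric.diam (xi (k + N₀) '' ω) := by
        rw [← Real.dist_eq]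
        exact Metric.dist_le_diam_of_mem hbdd ⟨bb, hbb, rfl⟩ ⟨cc, hcc, rfl⟩
      calc |xi k bb - xi k cc| = |∫ x in cc..bb, Q k x| := by rw [hFTCk]
        _ ≤ ∫ x in cc..bb, |Q k x| := intervalIntegral.abs_integral_le_integral_abs hcb
        _ ≤ ∫ x in cc..bb, X⁻¹ * |Q (k+N₀) x| := hmono
        _ = X⁻¹ * ∫ x in cc..bb, |Q (k+N₀) x| := intervalIntegral.integral_const_mul _ _
        _ = X⁻¹ * |∫ x in cc..bb, Q (k+N₀) x| := by rw [habsint]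
        _ = X⁻¹ * |xi (k+N₀) bb - xi (k+N₀) cc| := by rw [hFTCK]
        _ ≤ X⁻¹ * Metric.diam (xi (k + N₀) '' ω) := by
            apply mul_le_mul_of_nonneg_left hdiam (by positivity)
    -- conclude
    have hdiam2 : Metric.diam (xi k '' ω) ≤ X⁻¹ * Metric.diam (xi (k + N₀) '' ω) := by
      apply Metric.diam_le_of_forall_dist_le
      · exact mul_nonneg (by positivity) Metric.diam_nonneg
      · rintro u ⟨b1, hb1, rfl⟩ v ⟨c1, hc1, rfl⟩
        rw [Real.dist_eq]
        rcases le_total c1 b1 with h | h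
        · exact pair b1 hb1 c1 hc1 h
        · rw [abs_sub_comm]; exact pair c1 hc1 b1 hb1 h
    rw [hexpX]
    have hfin := mul_le_mul_of_nonneg_left hdiam2 hX0.le
    rwa [← mul_assoc, mul_inv_cancel₀ (ne_of_gt hX0), one_mul] at hfin
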